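/- arXiv:math/0503374 — 2 statements merged into one kernel-verified Lean document; each statement's English description precedes it below -/
import Mathlib

section
/- Let (E,π) be a labelled graph with no sinks and (Ê,π̂) its dual labelled graph. Then: (a) for every word ab ∈ ℒ²(E,π) and every letter c ∈ 𝒜, c ∈ L¹_{r(ab)} if and only if bc ∈ L̂¹_{r_{π̂}(ab)}, and in that case r(r(ab), c) = r(s(r_{π̂}(ab)), bc), where s(B) = {s(f) : f ∈ B} for B ⊆ E¹; (b) for every A ⊆ E⁰ and a, b ∈ 𝒜, one has a ∈ L¹_A and b ∈ L¹_{r(A,a)} if and only if ab ∈ L̂¹_{s⁻¹(A)}, where s⁻¹(A) = {e ∈ E¹ : s(e) ∈ A}. -/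
/-- A labelled graph: a directed graph with vertex type `V`, edge type `E`,
source and range maps, together with a labelling of the edges by the alphabet `A`. -/
structure LabelledGraph (V : Type*) (E : Type*) (A : Type*) where
  src : E → V
  rng : E → V
  lbl : E → A

namespace LabelledGraph

variable {V E A : Type*}

/-- A path is a nonempty list of edges such that the range of each edge is the
source of the next one. -/
def IsPath (G : LabelledGraph V E A) (l : List E) : Prop :=
  l ≠ [] ∧ l.Chain' (fun e f => G.rng e = G.src f)

/-- The language `ℒ(E,π)`: all (nonempty) words over `A` represented by some path. -/
def language (G : LabelledGraph V E A) : Set (List A) :=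
  { α | ∃ l, G.IsPath l ∧ l.map G.lbl = α }

/-- `s(α)`: sources of paths representing the word `α`. -/
def srcSet (G : LabelledGraph V E A) (α : List A) : Set V :=
  { v | ∃ l, ∃ h : G.IsPath l, l.map G.lbl = α ∧ G.src (l.head h.1) = v }

/-- `r(α)`: ranges of paths representing the word `α`. -/
def rngSet (G : LabelledGraph V E A) (α : List A) : Set V :=
  { v | ∃ l, ∃ h : G.IsPath l, l.map G.lbl = α ∧ G.rng (l.getLast h.1) = v }

/-- `r(S,α)`: the relative range of the word `α` with respect to the set `S` of vertices. -/
def relRng (G : LabelledGraph V E A) (S : Set V) (α : List A) : Set V :=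
  { v | ∃ l, ∃ h : G.IsPath l,
      l.map G.lbl = α ∧ G.src (l.head h.1) ∈ S ∧ G.rng (l.getLast h.1) = v }

/-- A labelled graph is left-resolving if the labelling is injective on the set
of incoming edges of each vertex. -/
def LeftResolving (G : LabelledGraph V E A) : Prop :=
  ∀ v : V, Set.InjOn G.lbl { e | G.rng e = v }

/-- A sink is a vertex emitting no edges. -/
def IsSink (G : LabelledGraph V E A) (v : V) : Prop := ∀ e : E, G.src e ≠ v

/-- A source is a vertex receiving no edges. -/
def IsSource (G : LabelledGraph V E A) (v : V) : Prop := ∀ e : E, G.rng e ≠ v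

/-- `L¹_S`: the letters `a` (labelled paths of length one) with `S ∩ s(a) ≠ ∅`. -/
def L1 (G : LabelledGraph V E A) (S : Set V) : Set A :=
  { a | (S ∩ G.srcSet [a]).Nonempty }

/-- `Lⁿ_S`: the words of length `n` whose source set meets `S`. -/
def Ln (G : LabelledGraph V E A) (S : Set V) (n : ℕ) : Set (List A) :=
  { α | α.length = n ∧ (S ∩ G.srcSet α).Nonempty }

/-- A collection `C` of subsets of vertices is accommodating for `G` if it contains all
ranges `r(α)`, is closed under relative ranges, and under finite intersections and unions. -/
structure Accommodating (G : LabelledGraph V E A) (C : Set (Set V)) : Prop where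
  rng_mem : ∀ α ∈ G.language, G.rngSet α ∈ C
  relRng_mem : ∀ S ∈ C, ∀ α ∈ G.language, G.relRng S α ∈ C
  inter_mem : ∀ S ∈ C, ∀ T ∈ C, S ∩ T ∈ C
  union_mem : ∀ S ∈ C, ∀ T ∈ C, S ∪ T ∈ C

/-- The labelled space `(E,π,C)` is weakly left-resolving. -/
def WeaklyLeftResolving (G : LabelledGraph V E A) (C : Set (Set V)) : Prop :=
  ∀ S ∈ C, ∀ T ∈ C, ∀ α ∈ G.language,
    G.relRng S α ∩ G.relRng T α = G.relRng (S ∩ T) α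

/-- The labelled space `(E,π,C)` is set-finite. -/
def SetFinite (G : LabelledGraph V E A) (C : Set (Set V)) : Prop :=
  ∀ S ∈ C, (G.L1 S).Finite

/-- The collection `ℰ`. -/
def calE (G : LabelledGraph V E A) : Set (Set V) :=
  { S | ∃ v, (G.IsSource v ∨ G.IsSink v) ∧ S = {v} } ∪
    (G.rngSet '' G.language) ∪ (G.srcSet '' G.language)

/-- The collection `ℰ₋`. -/
def calEminus (G : LabelledGraph V E A) : Set (Set V) :=
  { S | ∃ v, G.IsSink v ∧ S = {v} } ∪ (G.rngSet '' G.language)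

/-- `ℰ⁰`: the smallest accommodating collection containing `ℰ`. -/
def E0 (G : LabelledGraph V E A) : Set (Set V) :=
  ⋂₀ { C | G.calE ⊆ C ∧ G.Accommodating C }

/-- `ℰ⁰₋`: the smallest accommodating collection containing `ℰ₋`. -/
def E0minus (G : LabelledGraph V E A) : Set (Set V) :=
  ⋂₀ { C | G.calEminus ⊆ C ∧ G.Accommodating C }

/-- The dual labelled graph `(Ê,π̂)`: vertices are edges of `G`, edges are paths of
length two, labelled by the corresponding words of length two. -/
def dual (G : LabelledGraph V E A) :
    LabelledGraph E { ef : E × E // G.rng ef.1 = G.src ef.2 } (List A) where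
  src ef := ef.1.1
  rng ef := ef.1.2
  lbl ef := [G.lbl ef.1.1, G.lbl ef.1.2]

end LabelledGraph

/-- The product `s_{a₁} ⋯ s_{aₙ}` associated to a word `a₁⋯aₙ` (with junk value `0` on
the empty word). -/
def sWord {A B : Type*} [Mul B] [Zero B] (s : A → B) : List A → B
  | [] => 0
  | [a] => s a
  | a :: b :: l => s a * sWord s (b :: l)

namespace LabelledGraph

/-- A representation of the labelled space `(G, C)` in a C*-algebra `B`: a family of
projections `p S` for `S ∈ C` and partial isometries `s a` for `a ∈ ℒ¹` satisfying the
relations (i)-(iv). -/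
structure IsRepresentation {V E A : Type*} (G : LabelledGraph V E A) (C : Set (Set V))
    {B : Type*} [NonUnitalRing B] [StarRing B] (p : Set V → B) (s : A → B) : Prop where
  p_star : ∀ S ∈ C, star (p S) = p S
  p_idem : ∀ S ∈ C, p S * p S = p S
  s_partialIsometry : ∀ a, [a] ∈ G.language → s a * star (s a) * s a = s a
  p_empty : p ∅ = 0
  p_inter : ∀ S ∈ C, ∀ T ∈ C, p S * p T = p (S ∩ T)
  p_union : ∀ S ∈ C, ∀ T ∈ C, p (S ∪ T) = p S + p T - p (S ∩ T)
  p_mul_s : ∀ S ∈ C, ∀ a, [a] ∈ G.language → p S * s a = s a * p (G.relRng S [a])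
  star_s_mul_s : ∀ a, [a] ∈ G.language → star (s a) * s a = p (G.rngSet [a])
  s_orth : ∀ a b, [a] ∈ G.language → [b] ∈ G.language → a ≠ b → star (s a) * s b = 0
  cuntz_krieger : ∀ S ∈ C, ∀ hfin : (G.L1 S).Finite, (G.L1 S).Nonempty →
    p S = ∑ a ∈ hfin.toFinset, s a * p (G.relRng S [a]) * star (s a)

end LabelledGraph

/-- The C*-subalgebra of `B` generated by a set, as a subset of `B`: the closure of the
non-unital star subalgebra generated by the set. -/
def genCStar (B : Type*) [NonUnitalCStarAlgebra B] (gens : Set B) : Set B :=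
  closure (NonUnitalStarAlgebra.adjoin ℂ gens : Set B)

/-- An action of the circle group `𝕋` by *-automorphisms on `B`, strongly continuous. -/
structure CircleAction (B : Type*) [NonUnitalCStarAlgebra B] where
  act : Circle → B → B
  act_one : act 1 = id
  act_mul : ∀ z w, act (z * w) = act z ∘ act w
  act_bijective : ∀ z, Function.Bijective (act z)
  map_add : ∀ z x y, act z (x + y) = act z x + act z y
  map_mul : ∀ z x y, act z (x * y) = act z x * act z y
  map_smul : ∀ z (c : ℂ) x, act z (c • x) = c • act z x
  map_star : ∀ z x, act z (star x) = star (act z x)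
  continuous : ∀ x, Continuous fun z => act z x

/-- A gauge action for a representation `{s_a, p_A}`: the circle action fixes the
projections and scales the partial isometries. -/
def IsGaugeAction {V E A : Type*} (G : LabelledGraph V E A) (C : Set (Set V))
    {B : Type*} [NonUnitalCStarAlgebra B] (p : Set V → B) (s : A → B)
    (γ : CircleAction B) : Prop :=
  (∀ z a, [a] ∈ G.language → γ.act z (s a) = (z : ℂ) • s a) ∧
  (∀ z, ∀ S ∈ C, γ.act z (p S) = p S)

/-- A Cuntz–Krieger family for the directed graph underlying `G`. -/
structure IsCKFamily {V E A : Type*} (G : LabelledGraph V E A)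
    {B : Type*} [NonUnitalRing B] [StarRing B] (p : V → B) (s : E → B) : Prop where
  p_star : ∀ v, star (p v) = p v
  p_idem : ∀ v, p v * p v = p v
  p_orth : ∀ v w, v ≠ w → p v * p w = 0
  star_s_mul_s : ∀ e, star (s e) * s e = p (G.rng e)
  s_orth : ∀ e f, e ≠ f → star (s e) * s f = 0
  cuntz_krieger : ∀ v, (∃ e, G.src e = v) → ∀ hfin : {e | G.src e = v}.Finite,
    p v = ∑ e ∈ hfin.toFinset, s e * star (s e)

namespace LabelledGraph

variable {V E A : Type*} {G : LabelledGraph V E A}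

private lemma map_eq_one {l : List E} {a : A} (h : l.map G.lbl = [a]) :
    ∃ e, l = [e] ∧ G.lbl e = a := by
  cases l with
  | nil => simp at h
  | cons e t =>
    cases t with
    | nil => simp_all
    | cons f t' => simp at h

private lemma map_eq_two {l : List E} {a b : A} (h : l.map G.lbl = [a, b]) :
    ∃ e f, l = [e, f] ∧ G.lbl e = a ∧ G.lbl f = b := by
  cases l with
  | nil => simp at h
  | cons e t =>
    cases t with
    | nil => simp at h
    | cons f t' =>
      cases t' with
      | nil => simp only [List.map_cons, List.map_nil, List.cons.injEq, and_true] at h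
               exact ⟨e, f, rfl, h⟩
      | cons g t'' => simp at h

private lemma isPath_one (e : E) : G.IsPath [e] := ⟨by simp, by simp [List.Chain']⟩

private lemma isPath_two {e f : E} (h : G.rng e = G.src f) : G.IsPath [e, f] :=
  ⟨by simp, by simp [List.Chain', h]⟩

lemma mem_srcSet_one {v : V} {a : A} :
    v ∈ G.srcSet [a] ↔ ∃ e, G.lbl e = a ∧ G.src e = v := by
  constructor
  · rintro ⟨l, h, hmap, hsrc⟩
    obtain ⟨e, rfl, he⟩ := map_eq_one hmap
    exact ⟨e, he, hsrc⟩
  · rintro ⟨e, he, hv⟩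
    exact ⟨[e], isPath_one e, by simp [he], hv⟩

lemma mem_srcSet_two {v : V} {a b : A} :
    v ∈ G.srcSet [a, b] ↔
      ∃ e f, G.rng e = G.src f ∧ G.lbl e = a ∧ G.lbl f = b ∧ G.src e = v := by
  constructor
  · rintro ⟨l, h, hmap, hsrc⟩
    obtain ⟨e, f, rfl, he, hf⟩ := map_eq_two hmap
    exact ⟨e, f, by simpa [IsPath, List.Chain'] using h.2, he, hf, hsrc⟩
  · rintro ⟨e, f, hef, he, hf, hv⟩
    exact ⟨[e, f], isPath_two hef, by simp [he, hf], hv⟩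

lemma mem_rngSet_one {v : V} {a : A} :
    v ∈ G.rngSet [a] ↔ ∃ e, G.lbl e = a ∧ G.rng e = v := by
  constructor
  · rintro ⟨l, h, hmap, hrng⟩
    obtain ⟨e, rfl, he⟩ := map_eq_one hmap
    exact ⟨e, he, hrng⟩
  · rintro ⟨e, he, hv⟩
    exact ⟨[e], isPath_one e, by simp [he], hv⟩

lemma mem_rngSet_two {v : V} {a b : A} :
    v ∈ G.rngSet [a, b] ↔
      ∃ e f, G.rng e = G.src f ∧ G.lbl e = a ∧ G.lbl f = b ∧ G.rng f = v := by
  constructor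
  · rintro ⟨l, h, hmap, hrng⟩
    obtain ⟨e, f, rfl, he, hf⟩ := map_eq_two hmap
    exact ⟨e, f, by simpa [IsPath, List.Chain'] using h.2, he, hf, by simpa using hrng⟩
  · rintro ⟨e, f, hef, he, hf, hv⟩
    exact ⟨[e, f], isPath_two hef, by simp [he, hf], by simpa using hv⟩

lemma mem_relRng_one {S : Set V} {v : V} {a : A} :
    v ∈ G.relRng S [a] ↔ ∃ e, G.lbl e = a ∧ G.src e ∈ S ∧ G.rng e = v := by
  constructor
  · rintro ⟨l, h, hmap, hS, hrng⟩
    obtain ⟨e, rfl, he⟩ := map_eq_one hmap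
    exact ⟨e, he, hS, hrng⟩
  · rintro ⟨e, he, hS, hv⟩
    exact ⟨[e], isPath_one e, by simp [he], hS, hv⟩

lemma mem_relRng_two {S : Set V} {v : V} {a b : A} :
    v ∈ G.relRng S [a, b] ↔
      ∃ e f, G.rng e = G.src f ∧ G.lbl e = a ∧ G.lbl f = b ∧
        G.src e ∈ S ∧ G.rng f = v := by
  constructor
  · rintro ⟨l, h, hmap, hS, hrng⟩
    obtain ⟨e, f, rfl, he, hf⟩ := map_eq_two hmap
    exact ⟨e, f, by simpa [IsPath, List.Chain'] using h.2, he, hf, hS, by simpa using hrng⟩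
  · rintro ⟨e, f, hef, he, hf, hS, hv⟩
    exact ⟨[e, f], isPath_two hef, by simp [he, hf], hS, by simpa using hv⟩

lemma mem_L1_iff {S : Set V} {a : A} :
    a ∈ G.L1 S ↔ ∃ e, G.lbl e = a ∧ G.src e ∈ S := by
  constructor
  · rintro ⟨v, hvS, hv⟩
    obtain ⟨e, he, rfl⟩ := mem_srcSet_one.mp hv
    exact ⟨e, he, hvS⟩
  · rintro ⟨e, he, hS⟩
    exact ⟨G.src e, hS, mem_srcSet_one.mpr ⟨e, he, rfl⟩⟩

end LabelledGraph

theorem dual_L1_correspondence {V E A : Type*} [Countable V] [Countable E]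
    (G : LabelledGraph V E A) (hns : ∀ v : V, ¬ G.IsSink v) :
    (∀ a b c : A, [a, b] ∈ G.language →
      ((c ∈ G.L1 (G.rngSet [a, b]) ↔
          [b, c] ∈ G.dual.L1 (G.dual.rngSet [[a, b]])) ∧
       (c ∈ G.L1 (G.rngSet [a, b]) →
          G.relRng (G.rngSet [a, b]) [c] =
            G.relRng (G.src '' G.dual.rngSet [[a, b]]) [b, c]))) ∧
    (∀ (S : Set V) (a b : A),
      (a ∈ G.L1 S ∧ b ∈ G.L1 (G.relRng S [a])) ↔
        [a, b] ∈ G.dual.L1 (G.src ⁻¹' S)) := by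
  constructor
  · intro a b c hab
    constructor
    · rw [LabelledGraph.mem_L1_iff, LabelledGraph.mem_L1_iff]
      constructor
      · rintro ⟨g, hg, hsrc⟩
        obtain ⟨e, f, hef, he, hf, hfg⟩ := LabelledGraph.mem_rngSet_two.mp hsrc
        refine ⟨⟨(f, g), hfg⟩, by simp [LabelledGraph.dual, hf, hg], ?_⟩
        exact LabelledGraph.mem_rngSet_one.mpr
          ⟨⟨(e, f), hef⟩, by simp [LabelledGraph.dual, he, hf], rfl⟩
      · rintro ⟨⟨⟨f, g⟩, hfg⟩, hlbl, hsrc⟩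
        simp only [LabelledGraph.dual, List.cons.injEq, and_true] at hlbl
        obtain ⟨⟨⟨e, f'⟩, hef⟩, hlbl', hrng⟩ := LabelledGraph.mem_rngSet_one.mp hsrc
        simp only [LabelledGraph.dual, List.cons.injEq, and_true] at hlbl' hrng
        subst hrng
        exact ⟨g, hlbl.2, LabelledGraph.mem_rngSet_two.mpr
          ⟨e, f', hef, hlbl'.1, hlbl.1, hfg⟩⟩
    · intro _
      ext v
      rw [LabelledGraph.mem_relRng_one, LabelledGraph.mem_relRng_two]
      constructor
      · rintro ⟨g, hg, hsrc, hv⟩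
        obtain ⟨e, f, hef, he, hf, hfg⟩ := LabelledGraph.mem_rngSet_two.mp hsrc
        refine ⟨f, g, hfg, hf, hg, ⟨f, ?_, rfl⟩, hv⟩
        exact LabelledGraph.mem_rngSet_one.mpr
          ⟨⟨(e, f), hef⟩, by simp [LabelledGraph.dual, he, hf], rfl⟩
      · rintro ⟨f', g, hf'g, hf', hg, ⟨f, hfmem, hsrceq⟩, hv⟩
        obtain ⟨⟨⟨e, f₀⟩, hef⟩, hlbl', hrng⟩ := LabelledGraph.mem_rngSet_one.mp hfmem
        simp only [LabelledGraph.dual, List.cons.injEq, and_true] at hlbl' hrng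
        subst hrng
        refine ⟨g, hg, LabelledGraph.mem_rngSet_two.mpr
          ⟨e, f', ?_, hlbl'.1, hf', hf'g⟩, hv⟩
        rw [hef, hsrceq]
  · intro S a b
    rw [LabelledGraph.mem_L1_iff, LabelledGraph.mem_L1_iff, LabelledGraph.mem_L1_iff]
    constructor
    · rintro ⟨-, f, hf, hsrc⟩
      obtain ⟨e, he, heS, hef⟩ := LabelledGraph.mem_relRng_one.mp hsrc
      exact ⟨⟨(e, f), hef⟩, by simp [LabelledGraph.dual, he, hf], heS⟩
    · rintro ⟨⟨⟨e, f⟩, hef⟩, hlbl, hsrc⟩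
      simp only [LabelledGraph.dual, List.cons.injEq, and_true] at hlbl hsrc
      exact ⟨⟨e, hlbl.1, hsrc⟩, ⟨f, hlbl.2,
        LabelledGraph.mem_relRng_one.mpr ⟨e, hlbl.1, hsrc, hef⟩⟩⟩
end

section
/- Let E be a row-finite directed graph with no sinks and let (E,π) be a left-resolving, label-finite labelled graph. Then every A ∈ ℰ⁰ is a finite subset of E⁰, and for any Cuntz–Krieger E-family {s_e, p_v} in a C*-algebra B, the operators T_a := Σ_{e ∈ E¹ : π(e) = a} s_e (a ∈ ℒ¹(E,π)) and Q_A := Σ_{v ∈ A} p_v (A ∈ ℰ⁰) form a representation of the labelled space (E,π,ℰ⁰) in B. If moreover {v} ∈ ℰ⁰ for every v ∈ E⁰, then p_v = Q_{{v}} for every v ∈ E⁰ and s_e = T_{π(e)} Q_{{r(e)}} for every e ∈ E¹, so that the C*-subalgebra of B generated by {T_a, Q_A} equals the C*-subalgebra generated by {s_e, p_v}. -/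
section AuxLemmas

open LabelledGraph
open scoped Classical

variable {V E A : Type*} (G : LabelledGraph V E A)

lemma aux_isPath_single (e : E) : G.IsPath [e] :=
  ⟨by simp, List.isChain_singleton _⟩

lemma aux_single_lang (e : E) : [G.lbl e] ∈ G.language :=
  ⟨[e], aux_isPath_single G e, rfl⟩

lemma aux_map_single {l : List E} {a : A} (h : l.map G.lbl = [a]) :
    ∃ e, l = [e] ∧ G.lbl e = a := by
  match l with
  | [e] => exact ⟨e, rfl, by simpa using h⟩
  | [] => simp at h
  | e :: f :: t => simp at h

lemma aux_srcSet_single (a : A) : G.srcSet [a] = G.src '' {e | G.lbl e = a} := by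
  ext v
  constructor
  · rintro ⟨l, h, hmap, hv⟩
    obtain ⟨e, rfl, he⟩ := aux_map_single G hmap
    exact ⟨e, he, hv⟩
  · rintro ⟨e, he, hv⟩
    have he' : G.lbl e = a := he
    exact ⟨[e], aux_isPath_single G e, by simp [he'], hv⟩

lemma aux_rngSet_single (a : A) : G.rngSet [a] = G.rng '' {e | G.lbl e = a} := by
  ext v
  constructor
  · rintro ⟨l, h, hmap, hv⟩
    obtain ⟨e, rfl, he⟩ := aux_map_single G hmap
    exact ⟨e, he, hv⟩
  · rintro ⟨e, he, hv⟩
    have he' : G.lbl e = a := he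
    exact ⟨[e], aux_isPath_single G e, by simp [he'], hv⟩

lemma aux_relRng_single (S : Set V) (a : A) :
    G.relRng S [a] = G.rng '' {e | G.lbl e = a ∧ G.src e ∈ S} := by
  ext v
  constructor
  · rintro ⟨l, h, hmap, hsrc, hv⟩
    obtain ⟨e, rfl, he⟩ := aux_map_single G hmap
    exact ⟨e, ⟨he, hsrc⟩, hv⟩
  · rintro ⟨e, ⟨he, hs⟩, hv⟩
    exact ⟨[e], aux_isPath_single G e, by simp [he], hs, hv⟩

lemma aux_lbl_mem_finite (hlf : ∀ a : A, {e | G.lbl e = a}.Finite) (α : List A) :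
    {e | G.lbl e ∈ α}.Finite := by
  have hsub : {e | G.lbl e ∈ α} ⊆ ⋃ a ∈ α.toFinset, {e | G.lbl e = a} := by
    intro e he
    simp only [Set.mem_iUnion]
    exact ⟨G.lbl e, by simpa using he, rfl⟩
  exact (Set.Finite.biUnion (α.toFinset.finite_toSet) fun a _ => hlf a).subset hsub

lemma aux_rngSet_finite (hlf : ∀ a : A, {e | G.lbl e = a}.Finite) (α : List A) :
    (G.rngSet α).Finite := by
  apply ((aux_lbl_mem_finite G hlf α).image G.rng).subset
  rintro v ⟨l, h, hmap, hv⟩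
  refine ⟨l.getLast h.1, ?_, hv⟩
  show G.lbl (l.getLast h.1) ∈ α
  rw [← hmap]
  exact List.mem_map_of_mem (List.getLast_mem h.1)

lemma aux_srcSet_finite (hlf : ∀ a : A, {e | G.lbl e = a}.Finite) (α : List A) :
    (G.srcSet α).Finite := by
  apply ((aux_lbl_mem_finite G hlf α).image G.src).subset
  rintro v ⟨l, h, hmap, hv⟩
  refine ⟨l.head h.1, ?_, hv⟩
  show G.lbl (l.head h.1) ∈ α
  rw [← hmap]
  exact List.mem_map_of_mem (List.head_mem h.1)

lemma aux_relRng_finite (hlf : ∀ a : A, {e | G.lbl e = a}.Finite) (S : Set V) (α : List A) :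
    (G.relRng S α).Finite := by
  apply (aux_rngSet_finite G hlf α).subset
  rintro v ⟨l, h, hmap, _, hv⟩
  exact ⟨l, h, hmap, hv⟩

lemma aux_E0_finite (hlf : ∀ a : A, {e | G.lbl e = a}.Finite) :
    ∀ S ∈ G.E0, S.Finite := by
  intro S hS
  refine hS {T : Set V | T.Finite} ⟨?_, ?_⟩
  · rintro T ((⟨v, _, rfl⟩ | ⟨α, hα, rfl⟩) | ⟨α, hα, rfl⟩)
    · exact Set.finite_singleton v
    · exact aux_rngSet_finite G hlf α
    · exact aux_srcSet_finite G hlf α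
  · exact ⟨fun α _ => aux_rngSet_finite G hlf α,
      fun T _ α _ => aux_relRng_finite G hlf T α,
      fun T hT U _ => hT.inter_of_left U,
      fun T hT U hU => hT.union hU⟩

lemma aux_srcIn_finite (hrf : ∀ v : V, {e | G.src e = v}.Finite) {S : Set V}
    (hS : S.Finite) : {e | G.src e ∈ S}.Finite :=
  (hS.biUnion (fun v _ => hrf v)).subset fun e he => Set.mem_biUnion he rfl

lemma aux_src_iff_rng (hlr : G.LeftResolving) {S : Set V} {a : A} {e : E}
    (he : G.lbl e = a) : G.src e ∈ S ↔ G.rng e ∈ G.relRng S [a] := by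
  rw [aux_relRng_single]
  constructor
  · intro h; exact ⟨e, ⟨he, h⟩, rfl⟩
  · rintro ⟨f, ⟨hf, hfS⟩, hrf⟩
    have hef : f = e := hlr (G.rng e) hrf rfl (by rw [hf, he])
    rwa [← hef]

lemma aux_mem_L1 {S : Set V} {e : E} (h : G.src e ∈ S) : G.lbl e ∈ G.L1 S := by
  refine ⟨G.src e, h, ?_⟩
  rw [aux_srcSet_single]
  exact ⟨e, rfl, rfl⟩

lemma aux_L1_lang {S : Set V} {a : A} (h : a ∈ G.L1 S) : [a] ∈ G.language := by
  obtain ⟨v, -, hv⟩ := h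
  rw [aux_srcSet_single] at hv
  obtain ⟨e, he, -⟩ := hv
  rw [← he]
  exact aux_single_lang G e

lemma aux_toFinset_congr {α : Type*} {s t : Set α} (hs : s.Finite) (ht : t.Finite)
    (h : s = t) : hs.toFinset = ht.toFinset := by subst h; rfl

variable {B : Type*} [NonUnitalCStarAlgebra B]

lemma aux_pisom (x : B) (h : star x * x * (star x * x) = star x * x) :
    x * star x * x = x := by
  have key : star (x * star x * x - x) * (x * star x * x - x) = 0 := by
    have e1 : star (x * star x * x - x) = star x * x * star x - star x := by
      simp [star_sub, star_mul, mul_assoc]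
    rw [e1]
    have e2 : (star x * x * star x - star x) * (x * star x * x - x)
        = star x * x * (star x * x) * (star x * x) - star x * x * (star x * x)
          - star x * x * (star x * x) + star x * x := by noncomm_ring
    rw [e2, h, h]
    abel
  have h0 := (CStarRing.star_mul_self_eq_zero_iff _).1 key
  exact sub_eq_zero.1 h0

variable (p : V → B) (s : E → B)

lemma aux_s_pi (hck : IsCKFamily G p s) (e : E) : s e * star (s e) * s e = s e := by
  apply aux_pisom
  rw [hck.star_s_mul_s]
  exact hck.p_idem _

lemma aux_sp (hck : IsCKFamily G p s) (e : E) : s e * p (G.rng e) = s e := by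
  rw [← hck.star_s_mul_s, ← mul_assoc, aux_s_pi G p s hck]

lemma aux_s_mul_p (hck : IsCKFamily G p s) (e : E) (v : V) :
    s e * p v = if v = G.rng e then s e else 0 := by
  by_cases hv : v = G.rng e
  · rw [if_pos hv, hv, aux_sp G p s hck]
  · rw [if_neg hv, ← aux_sp G p s hck, mul_assoc,
      hck.p_orth _ _ (Ne.symm hv), mul_zero]

lemma aux_ps_star (hck : IsCKFamily G p s) (e : E) :
    p (G.rng e) * star (s e) = star (s e) := by
  rw [← hck.p_star, ← star_mul, aux_sp G p s hck]

lemma aux_s_mul_star (hck : IsCKFamily G p s) {e f : E} (h : G.rng e ≠ G.rng f) :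
    s e * star (s f) = 0 := by
  rw [← aux_ps_star G p s hck f, ← mul_assoc, aux_s_mul_p G p s hck,
    if_neg (Ne.symm h), zero_mul]

lemma aux_p_mul_s (hck : IsCKFamily G p s) (hrf : ∀ v : V, {e | G.src e = v}.Finite)
    (hns : ∀ v : V, ¬ G.IsSink v) (e : E) (v : V) :
    p v * s e = if v = G.src e then s e else 0 := by
  have hv : ∃ f, G.src f = v := by
    have h' := hns v
    unfold LabelledGraph.IsSink at h'
    push_neg at h'
    exact h'
  rw [hck.cuntz_krieger v hv (hrf v), Finset.sum_mul]
  by_cases h : v = G.src e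
  · rw [if_pos h]
    rw [Finset.sum_eq_single_of_mem e (by simp [Set.Finite.mem_toFinset, h.symm])]
    · rw [mul_assoc, hck.star_s_mul_s, aux_sp G p s hck]
    · intro f _ hfe
      rw [mul_assoc, hck.s_orth f e hfe, mul_zero]
  · rw [if_neg h]
    apply Finset.sum_eq_zero
    intro f hf
    have hf' : G.src f = v := by simpa [Set.Finite.mem_toFinset] using hf
    have hfe : f ≠ e := fun hfe => h (by rw [← hf', hfe])
    rw [mul_assoc, hck.s_orth f e hfe, mul_zero]

lemma aux_PS_mul_PT (hck : IsCKFamily G p s) {S T : Set V} (hS : S.Finite) (hT : T.Finite) :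
    (∑ v ∈ hS.toFinset, p v) * (∑ v ∈ hT.toFinset, p v)
      = ∑ v ∈ (hS.inter_of_left T).toFinset, p v := by
  rw [Finset.sum_mul_sum]
  have h1 : ∀ v, ∑ w ∈ hT.toFinset, p v * p w = if v ∈ hT.toFinset then p v else 0 := by
    intro v
    have h2 : ∀ w ∈ hT.toFinset, p v * p w = if v = w then p v else 0 := by
      intro w _
      by_cases h : v = w
      · rw [if_pos h, h, hck.p_idem]
      · rw [if_neg h, hck.p_orth v w h]
    rw [Finset.sum_congr rfl h2, Finset.sum_ite_eq hT.toFinset v fun _ => p v]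
  rw [Finset.sum_congr rfl (fun v _ => h1 v), Finset.sum_ite_mem]
  apply Finset.sum_congr _ (fun _ _ => rfl)
  ext v
  simp [Set.Finite.mem_toFinset]

lemma aux_T_mul_P (hck : IsCKFamily G p s) (a : A) {S : Set V}
    (hlfa : {e | G.lbl e = a}.Finite) (hS : S.Finite)
    (hfil : {e | G.lbl e = a ∧ G.rng e ∈ S}.Finite) :
    (∑ e ∈ hlfa.toFinset, s e) * (∑ v ∈ hS.toFinset, p v)
      = ∑ e ∈ hfil.toFinset, s e := by
  rw [Finset.sum_mul_sum]
  have h1 : ∀ e, ∑ v ∈ hS.toFinset, s e * p v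
      = if G.rng e ∈ hS.toFinset then s e else 0 := by
    intro e
    rw [Finset.sum_congr rfl (fun v _ => aux_s_mul_p G p s hck e v),
      Finset.sum_ite_eq' hS.toFinset (G.rng e) fun _ => s e]
  rw [Finset.sum_congr rfl (fun e _ => h1 e), ← Finset.sum_filter]
  apply Finset.sum_congr _ (fun _ _ => rfl)
  ext e
  simp [Set.Finite.mem_toFinset]

lemma aux_P_mul_T (hck : IsCKFamily G p s) (hrf : ∀ v : V, {e | G.src e = v}.Finite)
    (hns : ∀ v : V, ¬ G.IsSink v) (a : A) {S : Set V}
    (hlfa : {e | G.lbl e = a}.Finite) (hS : S.Finite)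
    (hfil : {e | G.lbl e = a ∧ G.src e ∈ S}.Finite) :
    (∑ v ∈ hS.toFinset, p v) * (∑ e ∈ hlfa.toFinset, s e)
      = ∑ e ∈ hfil.toFinset, s e := by
  rw [Finset.sum_mul_sum]
  have h1 : ∀ e, ∑ v ∈ hS.toFinset, p v * s e
      = if G.src e ∈ hS.toFinset then s e else 0 := by
    intro e
    rw [Finset.sum_congr rfl (fun v _ => aux_p_mul_s G p s hck hrf hns e v),
      Finset.sum_ite_eq' hS.toFinset (G.src e) fun _ => s e]
  rw [Finset.sum_comm, Finset.sum_congr rfl (fun e _ => h1 e), ← Finset.sum_filter]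
  apply Finset.sum_congr _ (fun _ _ => rfl)
  ext e
  simp [Set.Finite.mem_toFinset]

lemma aux_rng_injOn (hlr : G.LeftResolving) {a : A} :
    ∀ e, G.lbl e = a → ∀ f, G.lbl f = a → G.rng e = G.rng f → e = f := by
  intro e he f hf h
  exact hlr (G.rng f) h rfl (by rw [he, hf])

lemma aux_Tstar_mul_T (hck : IsCKFamily G p s) (a : A)
    (hlfa : {e | G.lbl e = a}.Finite) :
    star (∑ e ∈ hlfa.toFinset, s e) * (∑ e ∈ hlfa.toFinset, s e)
      = ∑ e ∈ hlfa.toFinset, p (G.rng e) := by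
  rw [star_sum, Finset.sum_mul_sum]
  refine Finset.sum_congr rfl fun e he => ?_
  have h1 : ∀ f ∈ hlfa.toFinset, star (s e) * s f = if e = f then p (G.rng f) else 0 := by
    intro f _
    by_cases h : e = f
    · rw [if_pos h, h, hck.star_s_mul_s]
    · rw [if_neg h, hck.s_orth e f h]
  rw [Finset.sum_congr rfl h1, Finset.sum_ite_eq hlfa.toFinset e fun f => p (G.rng f),
    if_pos he]

lemma aux_T1_mul_Tstar (hck : IsCKFamily G p s) (hlr : G.LeftResolving) (a : A)
    {F : Set E} (hFa : ∀ e ∈ F, G.lbl e = a) (hF : F.Finite)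
    (hlfa : {e | G.lbl e = a}.Finite) :
    (∑ e ∈ hF.toFinset, s e) * star (∑ f ∈ hlfa.toFinset, s f)
      = ∑ e ∈ hF.toFinset, s e * star (s e) := by
  rw [star_sum, Finset.sum_mul_sum]
  refine Finset.sum_congr rfl fun e he => ?_
  have hea : G.lbl e = a := hFa e ((Set.Finite.mem_toFinset hF).1 he)
  refine Finset.sum_eq_single_of_mem e (by simp [Set.Finite.mem_toFinset, hea]) ?_
  intro f hf hfe
  have hfa : G.lbl f = a := by simpa [Set.Finite.mem_toFinset] using hf
  exact aux_s_mul_star G p s hck fun h => hfe (aux_rng_injOn G hlr f hfa e hea h.symm)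

lemma aux_P_eq_sumq (hck : IsCKFamily G p s) (hrf : ∀ v : V, {e | G.src e = v}.Finite)
    (hns : ∀ v : V, ¬ G.IsSink v) {S : Set V} (hS : S.Finite)
    (hEF : {e | G.src e ∈ S}.Finite) :
    ∑ v ∈ hS.toFinset, p v = ∑ e ∈ hEF.toFinset, s e * star (s e) := by
  rw [← Finset.sum_fiberwise_of_maps_to (g := G.src) (t := hS.toFinset)
    (fun e he => by
      simp only [Set.Finite.mem_toFinset] at he ⊢
      exact he) (fun e => s e * star (s e))]
  refine Finset.sum_congr rfl fun v hv => ?_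
  have hvS : v ∈ S := (Set.Finite.mem_toFinset hS).1 hv
  have hex : ∃ e, G.src e = v := by
    have h' := hns v
    unfold LabelledGraph.IsSink at h'
    push_neg at h'
    exact h'
  rw [hck.cuntz_krieger v hex (hrf v)]
  refine Finset.sum_congr ?_ fun _ _ => rfl
  ext e
  simp only [Set.Finite.mem_toFinset, Finset.mem_filter, Set.mem_setOf_eq]
  constructor
  · intro h; exact ⟨h ▸ hvS, h⟩
  · intro h; exact h.2

end AuxLemmas

theorem ck_family_gives_representation {V E A : Type*} [Countable V] [Countable E]
    {B : Type*} [NonUnitalCStarAlgebra B]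
    (G : LabelledGraph V E A)
    (hrf : ∀ v : V, {e | G.src e = v}.Finite)
    (hns : ∀ v : V, ¬ G.IsSink v)
    (hlr : G.LeftResolving)
    (hlf : ∀ a : A, {e | G.lbl e = a}.Finite)
    (p : V → B) (s : E → B) (hck : IsCKFamily G p s) :
    (∀ S ∈ G.E0, S.Finite) ∧
    G.IsRepresentation G.E0
      (fun S => ∑ᶠ v ∈ S, p v)
      (fun a => ∑ᶠ e ∈ {e | G.lbl e = a}, s e) ∧
    ((∀ v : V, ({v} : Set V) ∈ G.E0) →
      (∀ v : V, p v = ∑ᶠ u ∈ ({v} : Set V), p u) ∧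
      (∀ e : E, s e = (∑ᶠ f ∈ {f | G.lbl f = G.lbl e}, s f) *
          (∑ᶠ u ∈ ({G.rng e} : Set V), p u)) ∧
      genCStar B
        ({ x | ∃ a, [a] ∈ G.language ∧ x = ∑ᶠ e ∈ {e | G.lbl e = a}, s e } ∪
         { x | ∃ S ∈ G.E0, x = ∑ᶠ v ∈ S, p v }) =
      genCStar B (Set.range s ∪ Set.range p)) := by
  classical
  have hE0fin : ∀ S ∈ G.E0, S.Finite := aux_E0_finite G hlf
  have hP : ∀ {S : Set V} (hS : S.Finite), (∑ᶠ v ∈ S, p v) = ∑ v ∈ hS.toFinset, p v :=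
    fun {S} hS => finsum_mem_eq_finite_toFinset_sum _ hS
  have hT : ∀ a : A, (∑ᶠ e ∈ {e | G.lbl e = a}, s e) = ∑ e ∈ (hlf a).toFinset, s e :=
    fun a => finsum_mem_eq_finite_toFinset_sum _ (hlf a)
  have key_pv : ∀ v : V, p v = ∑ᶠ u ∈ ({v} : Set V), p u :=
    fun v => (finsum_mem_singleton).symm
  have key_se : ∀ e : E, s e = (∑ᶠ f ∈ {f | G.lbl f = G.lbl e}, s f) *
      (∑ᶠ u ∈ ({G.rng e} : Set V), p u) := by
    intro e
    have hsum : ∑ f ∈ (hlf (G.lbl e)).toFinset, s f * p (G.rng e) = s e * p (G.rng e) := by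
      refine Finset.sum_eq_single_of_mem e (by simp [Set.Finite.mem_toFinset]) ?_
      intro f hf hfe
      have hfa : G.lbl f = G.lbl e := (Set.Finite.mem_toFinset (hlf (G.lbl e))).1 hf
      rw [aux_s_mul_p G p s hck, if_neg fun h => hfe (aux_rng_injOn G hlr f hfa e rfl h.symm)]
    rw [finsum_mem_singleton, hT (G.lbl e), Finset.sum_mul, hsum, aux_sp G p s hck]
  refine ⟨hE0fin, ?_, ?_⟩
  · constructor
    -- p_star
    · intro S hS
      beta_reduce
      rw [hP (hE0fin S hS), star_sum]
      exact Finset.sum_congr rfl fun v _ => hck.p_star v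
    -- p_idem
    · intro S hS
      beta_reduce
      have hSf := hE0fin S hS
      rw [hP hSf, aux_PS_mul_PT G p s hck hSf hSf]
      exact Finset.sum_congr (aux_toFinset_congr _ _ (Set.inter_self S)) fun _ _ => rfl
    -- s_partialIsometry
    · intro a ha
      beta_reduce
      rw [hT a, mul_assoc, aux_Tstar_mul_T G p s hck a (hlf a), Finset.sum_mul_sum]
      refine Finset.sum_congr rfl fun f hf => ?_
      have hfa : G.lbl f = a := (Set.Finite.mem_toFinset (hlf a)).1 hf
      have hsum : ∑ e ∈ (hlf a).toFinset, s f * p (G.rng e) = s f * p (G.rng f) := by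
        refine Finset.sum_eq_single_of_mem f hf ?_
        intro e he hef
        have hea : G.lbl e = a := (Set.Finite.mem_toFinset (hlf a)).1 he
        rw [aux_s_mul_p G p s hck, if_neg fun h => hef (aux_rng_injOn G hlr e hea f hfa h)]
      rw [hsum, aux_sp G p s hck]
    -- p_empty
    · beta_reduce
      exact finsum_mem_empty
    -- p_inter
    · intro S hS T hT'
      beta_reduce
      have hSf := hE0fin S hS
      have hTf := hE0fin T hT'
      rw [hP hSf, hP hTf, hP (hSf.inter_of_left T), aux_PS_mul_PT G p s hck hSf hTf]
    -- p_union
    · intro S hS T hT'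
      beta_reduce
      have hSf := hE0fin S hS
      have hTf := hE0fin T hT'
      rw [hP (hSf.union hTf), hP hSf, hP hTf, hP (hSf.inter_of_left T),
        Set.Finite.toFinset_union hSf hTf (hSf.union hTf),
        Set.Finite.toFinset_inter hSf hTf (hSf.inter_of_left T),
        eq_sub_iff_add_eq, Finset.sum_union_inter]
    -- p_mul_s
    · intro S hS a ha
      beta_reduce
      have hSf := hE0fin S hS
      have hRf : (G.relRng S [a]).Finite := aux_relRng_finite G hlf S [a]
      have hfil1 : {e | G.lbl e = a ∧ G.src e ∈ S}.Finite :=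
        (hlf a).subset fun e he => he.1
      have hfil2 : {e | G.lbl e = a ∧ G.rng e ∈ G.relRng S [a]}.Finite :=
        (hlf a).subset fun e he => he.1
      rw [hT a, hP hSf, hP hRf, aux_P_mul_T G p s hck hrf hns a (hlf a) hSf hfil1,
        aux_T_mul_P G p s hck a (hlf a) hRf hfil2]
      refine Finset.sum_congr (aux_toFinset_congr _ _ ?_) fun _ _ => rfl
      ext e
      simp only [Set.mem_setOf_eq]
      exact and_congr_right fun he => aux_src_iff_rng G hlr he
    -- star_s_mul_s
    · intro a ha
      beta_reduce
      have hRf : (G.rngSet [a]).Finite := aux_rngSet_finite G hlf [a]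
      rw [hT a, hP hRf, aux_Tstar_mul_T G p s hck a (hlf a)]
      have himg : hRf.toFinset = (hlf a).toFinset.image G.rng := by
        ext v
        simp [Set.Finite.mem_toFinset, aux_rngSet_single]
      rw [himg]
      exact (Finset.sum_image fun e he f hf h =>
        aux_rng_injOn G hlr e ((Set.Finite.mem_toFinset (hlf a)).1 he) f
          ((Set.Finite.mem_toFinset (hlf a)).1 hf) h).symm
    -- s_orth
    · intro a b ha hb hab
      beta_reduce
      rw [hT a, hT b, star_sum, Finset.sum_mul_sum]
      refine Finset.sum_eq_zero fun e he => Finset.sum_eq_zero fun f hf => ?_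
      refine hck.s_orth e f fun hef => hab ?_
      have hea : G.lbl e = a := (Set.Finite.mem_toFinset (hlf a)).1 he
      have hfb : G.lbl f = b := (Set.Finite.mem_toFinset (hlf b)).1 hf
      rw [← hea, hef, hfb]
    -- cuntz_krieger
    · intro S hS hfin hne
      beta_reduce
      have hSf := hE0fin S hS
      have hEF : {e | G.src e ∈ S}.Finite := aux_srcIn_finite G hrf hSf
      rw [hP hSf, aux_P_eq_sumq G p s hck hrf hns hSf hEF,
        ← Finset.sum_fiberwise_of_maps_to (g := G.lbl) (t := hfin.toFinset)
          (fun e he => by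
            simp only [Set.Finite.mem_toFinset] at he ⊢
            exact aux_mem_L1 G he) (fun e => s e * star (s e))]
      refine Finset.sum_congr rfl fun a ha => ?_
      have hRf : (G.relRng S [a]).Finite := aux_relRng_finite G hlf S [a]
      have hfil2 : {e | G.lbl e = a ∧ G.rng e ∈ G.relRng S [a]}.Finite :=
        (hlf a).subset fun e he => he.1
      rw [hT a, hP hRf, aux_T_mul_P G p s hck a (hlf a) hRf hfil2,
        aux_T1_mul_Tstar G p s hck hlr a (fun e he => he.1) hfil2 (hlf a)]
      refine Finset.sum_congr ?_ fun _ _ => rfl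
      ext e
      simp only [Finset.mem_filter, Set.Finite.mem_toFinset, Set.mem_setOf_eq]
      constructor
      · rintro ⟨h1, h2⟩
        exact ⟨h2, (aux_src_iff_rng G hlr h2).1 h1⟩
      · rintro ⟨h1, h2⟩
        exact ⟨(aux_src_iff_rng G hlr h1).2 h2, h1⟩
  · intro hsing
    refine ⟨key_pv, key_se, ?_⟩
    have hadj : NonUnitalStarAlgebra.adjoin ℂ
        ({ x | ∃ a, [a] ∈ G.language ∧ x = ∑ᶠ e ∈ {e | G.lbl e = a}, s e } ∪
         { x | ∃ S ∈ G.E0, x = ∑ᶠ v ∈ S, p v })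
        = NonUnitalStarAlgebra.adjoin ℂ (Set.range s ∪ Set.range p) := by
      apply le_antisymm
      · apply NonUnitalStarAlgebra.adjoin_le
        rintro x (⟨a, ha, rfl⟩ | ⟨S, hS, rfl⟩)
        · rw [hT a]
          exact sum_mem fun e _ =>
            NonUnitalStarAlgebra.subset_adjoin ℂ _ (Or.inl ⟨e, rfl⟩)
        · rw [hP (hE0fin S hS)]
          exact sum_mem fun v _ =>
            NonUnitalStarAlgebra.subset_adjoin ℂ _ (Or.inr ⟨v, rfl⟩)
      · apply NonUnitalStarAlgebra.adjoin_le
        rintro x (⟨e, rfl⟩ | ⟨v, rfl⟩)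
        · rw [key_se e]
          exact mul_mem
            (NonUnitalStarAlgebra.subset_adjoin ℂ _
              (Or.inl ⟨G.lbl e, aux_single_lang G e, rfl⟩))
            (NonUnitalStarAlgebra.subset_adjoin ℂ _
              (Or.inr ⟨{G.rng e}, hsing _, rfl⟩))
        · rw [key_pv v]
          exact NonUnitalStarAlgebra.subset_adjoin ℂ _
            (Or.inr ⟨{v}, hsing v, rfl⟩)
    unfold genCStar
    rw [hadj]
end
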